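/- arXiv:2210.14294 — 5 statements merged into one kernel-verified Lean document; each statement's English description precedes it below -/
import Mathlib

section
/- For every natural number n ≥ 1 and real numbers α ≥ 0, γ ≥ 1, one has (γ+α)^(n-1) · (n-1)! · Γ(γ+α) ≤ Γ((γ+α)·n), where Γ is the Euler Gamma function. -/
theorem gamma_ineq (n : ℕ) (hn : 1 ≤ n) (α γ : ℝ) (hα : 0 ≤ α) (hγ : 1 ≤ γ) :
    (γ + α) ^ (n - 1) * (Nat.factorial (n - 1) : ℝ) * Real.Gamma (γ + α) ≤
      Real.Gamma ((γ + α) * n) := by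
  set c : ℝ := γ + α with hc
  have hc1 : 1 ≤ c := by simp [hc]; linarith
  have hcpos : 0 < c := lt_of_lt_of_le one_pos hc1
  induction n with
  | zero => omega
  | succ m ih =>
    rcases Nat.eq_zero_or_pos m with hm | hm
    · subst hm
      simp
    · have ih' := ih hm
      have hmr : (1:ℝ) ≤ (m:ℝ) := by exact_mod_cast hm
      have hcm : 1 ≤ c * m := by nlinarith
      have hΓpos : 0 < Real.Gamma (c * m) := Real.Gamma_pos_of_pos (by linarith)
      have key : c * m * Real.Gamma (c * m) ≤ Real.Gamma (c * (m + 1)) := by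
        have h1 : c * m * Real.Gamma (c * m) = Real.Gamma (c * m + 1) := by
          rw [Real.Gamma_add_one (by positivity)]
        rw [h1]
        have hmem1 : (c * m + 1) ∈ Set.Ici (2:ℝ) := by
          simp [Set.mem_Ici]; linarith
        have hmem2 : (c * (m + 1)) ∈ Set.Ici (2:ℝ) := by
          simp [Set.mem_Ici]; nlinarith
        rcases eq_or_lt_of_le (show c * m + 1 ≤ c * (m+1) by nlinarith) with h | h
        · rw [h]
        · exact le_of_lt (Real.Gamma_strictMonoOn_Ici hmem1 hmem2 h)
      calc c ^ (m + 1 - 1) * (Nat.factorial (m + 1 - 1) : ℝ) * Real.Gamma c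
          = (c * m) * (c ^ (m - 1) * (Nat.factorial (m - 1) : ℝ) * Real.Gamma c) := by
            obtain ⟨k, rfl⟩ : ∃ k, m = k + 1 := ⟨m - 1, by omega⟩
            simp only [Nat.add_sub_cancel]
            push_cast [Nat.factorial_succ, pow_succ]
            ring
        _ ≤ (c * m) * Real.Gamma (c * m) := by
            apply mul_le_mul_of_nonneg_left ih'
            positivity
        _ ≤ Real.Gamma (c * (m + 1)) := key
        _ = Real.Gamma (c * ((m : ℕ) + 1 : ℕ)) := by push_cast; ring_nf
end

section
/- Let α ≥ 0, γ ≥ 1 be real and β ∈ ℂ with 2(γ+α) > |β|. Then for all z in the open unit disc, the normalized Rabotnov function satisfies |𝓡_{α,β,γ}(z)| ≤ (2(γ+α)+|β|)/(2(γ+α)−|β|). -/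
/-!
With `c = γ + α ≥ 1`, the recursion `Γ(x + c) ≥ Γ(x + 1) = x Γ(x)` (monotonicity of `Γ` on
`[2, ∞)`) gives `Γ(c (n + 1)) ≥ cⁿ n! Γ(c)`, and `2ⁿ ≤ 2 n!` turns this into
`|Aₙ| ≤ 2 qⁿ` with `q = |β| / (2c) < 1`. For `|z| < 1` the series is then dominated by
`1 + 2 ∑_{n ≥ 1} qⁿ = (1 + q) / (1 - q) = (2c + |β|) / (2c - |β|)`.
-/

open Complex

noncomputable def rabA (α γ : ℝ) (β : ℂ) (n : ℕ) : ℂ :=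
  β ^ n * (Real.Gamma (γ + α) : ℂ) / (Real.Gamma ((γ + α) * (n + 1)) : ℂ)

noncomputable def rab (α γ : ℝ) (β : ℂ) (z : ℂ) : ℂ :=
  z + ∑' k : ℕ, rabA α γ β (k + 1) * z ^ (k + 2)

noncomputable def rabPartial (α γ : ℝ) (β : ℂ) (m : ℕ) (z : ℂ) : ℂ :=
  z + ∑ k ∈ Finset.range m, rabA α γ β (k + 1) * z ^ (k + 2)

noncomputable def rabD (α γ : ℝ) (β : ℂ) (z : ℂ) : ℂ :=
  1 + ∑' k : ℕ, ((k : ℂ) + 2) * rabA α γ β (k + 1) * z ^ (k + 1)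

noncomputable def rabDPartial (α γ : ℝ) (β : ℂ) (m : ℕ) (z : ℂ) : ℂ :=
  1 + ∑ k ∈ Finset.range m, ((k : ℂ) + 2) * rabA α γ β (k + 1) * z ^ (k + 1)

noncomputable def rabAlex (α γ : ℝ) (β : ℂ) (z : ℂ) : ℂ :=
  z + ∑' k : ℕ, rabA α γ β (k + 1) / ((k : ℂ) + 2) * z ^ (k + 2)

noncomputable def rabAlexPartial (α γ : ℝ) (β : ℂ) (m : ℕ) (z : ℂ) : ℂ :=
  z + ∑ k ∈ Finset.range m, rabA α γ β (k + 1) / ((k : ℂ) + 2) * z ^ (k + 2)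

open Nat

theorem Nat.two_pow_le_two_mul_factorial (n : ℕ) : 2 ^ n ≤ 2 * n ! := by
  cases n with
  | zero => simp
  | succ n =>
    rw [pow_succ']
    exact Nat.mul_le_mul_left 2
      (by simpa [add_comm] using factorial_mul_pow_le_factorial (m := 1) (n := n))

namespace Real

theorem mul_Gamma_le_Gamma_add {x c : ℝ} (hx : 1 ≤ x) (hc : 1 ≤ c) :
    x * Gamma x ≤ Gamma (x + c) := by
  rw [← Gamma_add_one (by positivity)]
  exact Gamma_strictMonoOn_Ici.monotoneOn (Set.mem_Ici.2 (by linarith))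
    (Set.mem_Ici.2 (by linarith)) (by linarith)

theorem pow_mul_factorial_mul_Gamma_le {c : ℝ} (hc : 1 ≤ c) (n : ℕ) :
    c ^ n * n ! * Gamma c ≤ Gamma (c * (n + 1)) := by
  induction n with
  | zero => simp
  | succ n ih =>
    have hstep := mul_Gamma_le_Gamma_add (x := c * (n + 1)) (by nlinarith) hc
    calc c ^ (n + 1) * (n + 1)! * Gamma c
        = c * (n + 1) * (c ^ n * n ! * Gamma c) := by push_cast [factorial_succ]; ring
      _ ≤ c * (n + 1) * Gamma (c * (n + 1)) := by gcongr
      _ ≤ Gamma (c * ((n + 1 : ℕ) + 1)) := by convert hstep using 2; push_cast; ring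

theorem Gamma_mul_two_mul_pow_le {c : ℝ} (hc : 1 ≤ c) (n : ℕ) :
    Gamma c * (2 * c) ^ n ≤ 2 * Gamma (c * (n + 1)) := by
  have hfac : (2 : ℝ) ^ n ≤ 2 * n ! := mod_cast Nat.two_pow_le_two_mul_factorial n
  calc Gamma c * (2 * c) ^ n = 2 ^ n * (c ^ n * Gamma c) := by ring
    _ ≤ 2 * n ! * (c ^ n * Gamma c) := by gcongr
    _ = 2 * (c ^ n * n ! * Gamma c) := by ring
    _ ≤ 2 * Gamma (c * (n + 1)) := by gcongr; exact pow_mul_factorial_mul_Gamma_le hc n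

end Real

theorem norm_rabA {α γ : ℝ} (β : ℂ) (hc : 0 < γ + α) (n : ℕ) :
    ‖rabA α γ β n‖ = ‖β‖ ^ n * Real.Gamma (γ + α) / Real.Gamma ((γ + α) * (n + 1)) := by
  have h₁ := Real.Gamma_pos_of_pos hc
  have h₂ := Real.Gamma_pos_of_pos (by positivity : 0 < (γ + α) * (n + 1))
  simp [rabA, abs_of_pos h₁, abs_of_pos h₂]

theorem norm_rabA_le {α γ : ℝ} (β : ℂ) (hc : 1 ≤ γ + α) (n : ℕ) :
    ‖rabA α γ β n‖ ≤ 2 * (‖β‖ / (2 * (γ + α))) ^ n := by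
  set c := γ + α
  have hΓ := Real.Gamma_pos_of_pos (by positivity : 0 < c * (n + 1))
  rw [norm_rabA β (by linarith), div_le_iff₀ hΓ, div_pow,
    show 2 * (‖β‖ ^ n / (2 * c) ^ n) * Real.Gamma (c * (n + 1))
      = ‖β‖ ^ n * (2 * Real.Gamma (c * (n + 1))) / (2 * c) ^ n by ring,
    le_div_iff₀ (by positivity), mul_assoc]
  exact mul_le_mul_of_nonneg_left (Real.Gamma_mul_two_mul_pow_le hc n) (by positivity)

theorem norm_add_tsum_mul_pow_le {𝕜 : Type*} [NormedField 𝕜] {a : ℕ → 𝕜} {q : ℝ}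
    (hq₀ : 0 ≤ q) (hq₁ : q < 1) (ha : ∀ k, ‖a k‖ ≤ 2 * q ^ (k + 1)) {z : 𝕜} (hz : ‖z‖ ≤ 1) :
    ‖z + ∑' k, a k * z ^ (k + 2)‖ ≤ (1 + q) / (1 - q) := by
  have hterm (k : ℕ) : ‖a k * z ^ (k + 2)‖ ≤ 2 * q * q ^ k := by
    rw [norm_mul, norm_pow]
    calc ‖a k‖ * ‖z‖ ^ (k + 2) ≤ ‖a k‖ :=
          mul_le_of_le_one_right (norm_nonneg _) (pow_le_one₀ (norm_nonneg z) hz)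
      _ ≤ 2 * q * q ^ k := (ha k).trans_eq (by ring)
  have hgeom := (summable_geometric_of_lt_one hq₀ hq₁).mul_left (2 * q)
  have hsum := hgeom.of_nonneg_of_le (fun _ => norm_nonneg _) hterm
  calc ‖z + ∑' k, a k * z ^ (k + 2)‖ ≤ ‖z‖ + ‖∑' k, a k * z ^ (k + 2)‖ := norm_add_le _ _
    _ ≤ 1 + ∑' k, 2 * q * q ^ k :=
        add_le_add hz ((norm_tsum_le_tsum_norm hsum).trans (hsum.tsum_le_tsum hterm hgeom))
    _ = (1 + q) / (1 - q) := by
        rw [tsum_mul_left, tsum_geometric_of_lt_one hq₀ hq₁]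
        field_simp [(sub_pos.2 hq₁).ne']
        ring

theorem rab_bound (α γ : ℝ) (β : ℂ) (hα : 0 ≤ α) (hγ : 1 ≤ γ)
    (hβ : ‖β‖ < 2 * (γ + α)) (z : ℂ) (hz : ‖z‖ < 1) :
    ‖rab α γ β z‖ ≤
      (2 * (γ + α) + ‖β‖) / (2 * (γ + α) - ‖β‖) := by
  have hc : 1 ≤ γ + α := by linarith
  have hq₁ : ‖β‖ / (2 * (γ + α)) < 1 := (div_lt_one (by linarith)).2 hβ
  calc ‖rab α γ β z‖ ≤ (1 + ‖β‖ / (2 * (γ + α))) / (1 - ‖β‖ / (2 * (γ + α))) :=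
        norm_add_tsum_mul_pow_le (by positivity) hq₁ (fun k => norm_rabA_le β hc (k + 1)) hz.le
    _ = (2 * (γ + α) + ‖β‖) / (2 * (γ + α) - ‖β‖) := by
        field_simp
end

section
/- Let α ≥ 0, γ ≥ 1 be real, β ∈ ℂ with β ≠ 0 and γ+α ≥ 3|β|, and let m ≥ 0. Then for all z in the open unit disc, Re((𝓡_{α,β,γ})'_m(z) / 𝓡'_{α,β,γ}(z)) ≥ (γ+α−|β|)/(γ+α+|β|). -/
/-!
Split `𝓡' = 1 + H + T` into the partial sum `H` of the first `m` terms and the tail `T`.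
If `σ ≥ 2` and `‖H‖ + (σ - 1) ‖T‖ < 1`, then `‖σ T‖ ≤ ‖2 𝓡' - σ T‖`, i.e. `Re (σ T / 𝓡') ≤ 1`,
which is `Re ((1 + H) / 𝓡') ≥ (σ - 1) / σ`. Take `σ = (γ + α + |β|) / (2 |β|)`, so that
`(σ - 1) / σ` is the claimed bound and `σ ≥ 2` is `γ + α ≥ 3 |β|`. The hypothesis then
follows from `(σ - 1) ∑ (k + 2) |A_{k+1}| ≤ 1`, and `Γ((γ + α)(k + 2)) ≥ c Γ(c) (2c)^k` with
`c = γ + α ≥ 1` gives `|A_{k+1}| ≤ 2 w^{k+1}` for `w = |β| / (2c)`, reducing everything to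
`∑ (k + 2) w^k = (2 - w) / (1 - w)^2` and the inequality `(c - |β|)(4c - |β|) ≤ (2c - |β|)^2`.
-/

open Complex

lemma Real.Gamma_mul_pow_le_Gamma_add_nat {x : ℝ} (hx : 0 < x) (k : ℕ) :
    Real.Gamma x * x ^ k ≤ Real.Gamma (x + k) := by
  induction k with
  | zero => simp
  | succ k ih =>
    have hxk : 0 < x + k := by positivity
    calc Real.Gamma x * x ^ (k + 1) = x * (Real.Gamma x * x ^ k) := by ring
      _ ≤ x * Real.Gamma (x + k) := by gcongr
      _ ≤ (x + k) * Real.Gamma (x + k) := by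
          have := (Real.Gamma_pos_of_pos hxk).le
          gcongr
          linarith [k.cast_nonneg (α := ℝ)]
      _ = Real.Gamma (x + ↑(k + 1)) := by
          rw [Nat.cast_succ, ← add_assoc, Real.Gamma_add_one hxk.ne']

lemma Real.Gamma_le_Gamma_of_two_le {x y : ℝ} (hx : 2 ≤ x) (hxy : x ≤ y) :
    Real.Gamma x ≤ Real.Gamma y :=
  Real.Gamma_strictMonoOn_Ici.monotoneOn hx (hx.trans hxy) hxy

lemma Real.mul_Gamma_mul_two_mul_pow_le {c : ℝ} (hc : 1 ≤ c) (k : ℕ) :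
    c * Real.Gamma c * (2 * c) ^ k ≤ Real.Gamma (c * (k + 2)) := by
  calc c * Real.Gamma c * (2 * c) ^ k = Real.Gamma (c + 1) * (2 * c) ^ k := by
        rw [Real.Gamma_add_one (by linarith)]
    _ ≤ Real.Gamma (2 * c) * (2 * c) ^ k := by
        gcongr
        exact Real.Gamma_le_Gamma_of_two_le (by linarith) (by linarith)
    _ ≤ Real.Gamma (2 * c + k) := Real.Gamma_mul_pow_le_Gamma_add_nat (by linarith) k
    _ ≤ Real.Gamma (c * (k + 2)) := Real.Gamma_le_Gamma_of_two_le (by linarith) (by nlinarith)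

lemma hasSum_nat_add_two_mul_pow {w : ℝ} (hw : ‖w‖ < 1) :
    HasSum (fun k : ℕ => ((k : ℝ) + 2) * w ^ k) ((2 - w) / (1 - w) ^ 2) := by
  have hw1 : 1 - w ≠ 0 := by
    have := (Real.norm_eq_abs w ▸ hw : |w| < 1); linarith [le_abs_self w]
  have hsum := (hasSum_coe_mul_geometric_of_norm_lt_one hw).add
    ((hasSum_geometric_of_norm_lt_one hw).mul_left 2)
  rw [show w / (1 - w) ^ 2 + 2 * (1 - w)⁻¹ = (2 - w) / (1 - w) ^ 2 by field_simp; ring] at hsum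
  simpa only [add_mul] using hsum

noncomputable def rabDTerm (α γ : ℝ) (β : ℂ) (z : ℂ) (k : ℕ) : ℂ :=
  ((k : ℂ) + 2) * rabA α γ β (k + 1) * z ^ (k + 1)

section Coefficients

variable {α γ : ℝ} {β z : ℂ}

lemma norm_rabA_succ_le (hc : 1 ≤ γ + α) (k : ℕ) :
    ‖rabA α γ β (k + 1)‖ ≤ 2 * (‖β‖ / (2 * (γ + α))) ^ (k + 1) := by
  set c := γ + α
  have hc0 : 0 < c := by linarith
  have hG : 0 < Real.Gamma c := Real.Gamma_pos_of_pos hc0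
  have hGk : 0 < Real.Gamma (c * (k + 2)) := Real.Gamma_pos_of_pos (by positivity)
  have hnorm :
      ‖rabA α γ β (k + 1)‖ = ‖β‖ ^ (k + 1) * Real.Gamma c / Real.Gamma (c * (k + 2)) := by
    rw [rabA, norm_div, norm_mul, norm_pow, norm_real, norm_real, Real.norm_of_nonneg hG.le]
    push_cast
    rw [add_assoc, one_add_one_eq_two, Real.norm_of_nonneg hGk.le]
  rw [hnorm, div_le_iff₀ hGk]
  calc ‖β‖ ^ (k + 1) * Real.Gamma c
      = 2 * (‖β‖ / (2 * c)) ^ (k + 1) * (c * Real.Gamma c * (2 * c) ^ k) := by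
        rw [div_pow, mul_pow, mul_pow]; field_simp; ring
    _ ≤ 2 * (‖β‖ / (2 * c)) ^ (k + 1) * Real.Gamma (c * (k + 2)) := by
        gcongr; exact Real.mul_Gamma_mul_two_mul_pow_le hc k

lemma norm_rabDTerm_le (hc : 1 ≤ γ + α) (hz : ‖z‖ ≤ 1) (k : ℕ) :
    ‖rabDTerm α γ β z k‖ ≤
      ‖z‖ * (2 * (‖β‖ / (2 * (γ + α)))) * (((k : ℝ) + 2) * (‖β‖ / (2 * (γ + α))) ^ k) := by
  have hk : ‖(k : ℂ) + 2‖ = (k : ℝ) + 2 := by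
    rw [show (k : ℂ) + 2 = ((k + 2 : ℝ) : ℂ) by push_cast; rfl, norm_real,
      Real.norm_of_nonneg (by positivity)]
  have hzk : ‖z‖ ^ (k + 1) ≤ ‖z‖ := pow_le_of_le_one (norm_nonneg z) hz k.succ_ne_zero
  rw [rabDTerm, norm_mul, norm_mul, norm_pow, hk]
  calc ((k : ℝ) + 2) * ‖rabA α γ β (k + 1)‖ * ‖z‖ ^ (k + 1)
      ≤ ((k : ℝ) + 2) * (2 * (‖β‖ / (2 * (γ + α))) ^ (k + 1)) * ‖z‖ := by
        gcongr
        exact norm_rabA_succ_le hc k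
    _ = _ := by ring

lemma summable_norm_rabDTerm_and_tsum_le (hc : 1 ≤ γ + α) (hβ : ‖β‖ < 2 * (γ + α))
    (hz : ‖z‖ ≤ 1) :
    Summable (fun k => ‖rabDTerm α γ β z k‖) ∧
      ∑' k, ‖rabDTerm α γ β z k‖ ≤
        ‖z‖ * (2 * (‖β‖ / (2 * (γ + α)))) *
          ((2 - ‖β‖ / (2 * (γ + α))) / (1 - ‖β‖ / (2 * (γ + α))) ^ 2) := by
  set w := ‖β‖ / (2 * (γ + α))
  have hw : ‖w‖ < 1 := by
    rw [Real.norm_of_nonneg (by positivity), div_lt_one (by linarith)]; exact hβ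
  have hmaj := (hasSum_nat_add_two_mul_pow hw).mul_left (‖z‖ * (2 * w))
  have hsum : Summable (fun k => ‖rabDTerm α γ β z k‖) :=
    .of_nonneg_of_le (fun _ => norm_nonneg _) (norm_rabDTerm_le hc hz) hmaj.summable
  exact ⟨hsum, hasSum_le (norm_rabDTerm_le hc hz) hsum.hasSum hmaj⟩

end Coefficients

lemma Complex.re_le_one_of_norm_le_norm_two_sub {x : ℂ} (h : ‖x‖ ≤ ‖2 - x‖) : x.re ≤ 1 := by
  have hsq : ‖2 - x‖ ^ 2 - ‖x‖ ^ 2 = 4 - 4 * x.re := by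
    rw [Complex.sq_norm, Complex.sq_norm, normSq_apply, normSq_apply]
    simp only [sub_re, sub_im, re_ofNat, im_ofNat]
    ring
  nlinarith [pow_le_pow_left₀ (norm_nonneg x) h 2]

lemma le_re_one_add_div_one_add_add {H T : ℂ} {σ : ℝ} (hσ : 2 ≤ σ)
    (hHT : ‖H‖ + (σ - 1) * ‖T‖ < 1) :
    (σ - 1) / σ ≤ ((1 + H) / (1 + H + T)).re := by
  have hσ0 : 0 < σ := by linarith
  have hσ0' : (σ : ℂ) ≠ 0 := ofReal_ne_zero.mpr hσ0.ne'
  have hD : 1 + H + T ≠ 0 := by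
    intro h
    have : ‖H + T‖ = 1 := by rw [show H + T = -1 by linear_combination h, norm_neg, norm_one]
    nlinarith [norm_add_le H T, norm_nonneg T]
  have hσ2 : ‖(2 : ℂ) - σ‖ = σ - 2 := by
    rw [show (2 : ℂ) - σ = ((2 - σ : ℝ) : ℂ) by push_cast; ring, norm_real,
      Real.norm_of_nonpos (by linarith), neg_sub]
  have hnorm : ‖(σ : ℂ) * T‖ ≤ ‖2 * (1 + H + T) - σ * T‖ := by
    have hrest : ‖2 * H + (2 - σ) * T‖ ≤ 2 * ‖H‖ + (σ - 2) * ‖T‖ := by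
      refine (norm_add_le _ _).trans ?_
      rw [norm_mul, norm_mul, hσ2, Complex.norm_two]
    have htri := norm_sub_norm_le (2 : ℂ) (-(2 * H + (2 - σ) * T))
    rw [norm_neg, sub_neg_eq_add, Complex.norm_two] at htri
    rw [norm_mul, norm_real, Real.norm_of_nonneg hσ0.le,
      show 2 * (1 + H + T) - σ * T = 2 + (2 * H + (2 - σ) * T) by ring]
    nlinarith [norm_nonneg T]
  have hre : (σ * T / (1 + H + T)).re ≤ 1 := by
    apply Complex.re_le_one_of_norm_le_norm_two_sub
    rw [show (2 : ℂ) - σ * T / (1 + H + T) = (2 * (1 + H + T) - σ * T) / (1 + H + T) by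
      field_simp, norm_div, norm_div]
    gcongr
  have hQ : (1 + H) / (1 + H + T) = 1 - (σ * T / (1 + H + T)) / σ := by
    field_simp
    ring
  rw [hQ, sub_re, one_re, div_ofReal_re, sub_div, div_self hσ0.ne', sub_le_sub_iff_left]
  gcongr

lemma le_re_one_add_sum_range_div_one_add_tsum {f : ℕ → ℂ} {σ : ℝ} (hσ : 2 ≤ σ)
    (hf : Summable (fun k => ‖f k‖)) (hfσ : (σ - 1) * ∑' k, ‖f k‖ < 1) (m : ℕ) :
    (σ - 1) / σ ≤ ((1 + ∑ k ∈ Finset.range m, f k) / (1 + ∑' k, f k)).re := by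
  have htail : Summable (fun k => ‖f (k + m)‖) := (summable_nat_add_iff m).mpr hf
  have hH := norm_sum_le (Finset.range m) f
  have hT := norm_tsum_le_tsum_norm htail
  have hnorms := hf.sum_add_tsum_nat_add m
  rw [← hf.of_norm.sum_add_tsum_nat_add m, ← add_assoc]
  apply le_re_one_add_div_one_add_add hσ
  nlinarith [norm_nonneg (∑ k ∈ Finset.range m, f k)]

theorem rabD_partial_re2 (α γ : ℝ) (β : ℂ) (hα : 0 ≤ α) (hγ : 1 ≤ γ)
    (hβ0 : β ≠ 0) (hβ : 3 * ‖β‖ ≤ γ + α) (m : ℕ) (z : ℂ)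
    (hz : ‖z‖ < 1) :
    (γ + α - ‖β‖) / (γ + α + ‖β‖) ≤
      (rabDPartial α γ β m z / rabD α γ β z).re := by
  have hc : 1 ≤ γ + α := by linarith
  obtain ⟨hsum, hle⟩ := summable_norm_rabDTerm_and_tsum_le (β := β) hc (by linarith) hz.le
  set c := γ + α
  set b := ‖β‖
  set w := b / (2 * c)
  have hb : 0 < b := norm_pos_iff.mpr hβ0
  set σ := (c + b) / (2 * b)
  have hσ : 2 ≤ σ := by rw [le_div_iff₀ (by positivity)]; linarith
  have hweight : (σ - 1) * (2 * w * ((2 - w) / (1 - w) ^ 2)) ≤ 1 := by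
    have h2cb : 0 < 2 * c - b := by linarith
    have hexpand :
        (σ - 1) * (2 * w * ((2 - w) / (1 - w) ^ 2)) = (c - b) * (4 * c - b) / (2 * c - b) ^ 2 := by
      simp only [σ, w]; field_simp; ring
    rw [hexpand, div_le_one (by positivity)]
    nlinarith
  have hσsum : (σ - 1) * ∑' k, ‖rabDTerm α γ β z k‖ < 1 :=
    calc (σ - 1) * ∑' k, ‖rabDTerm α γ β z k‖
        ≤ ‖z‖ * ((σ - 1) * (2 * w * ((2 - w) / (1 - w) ^ 2))) := by nlinarith
      _ ≤ ‖z‖ * 1 := by gcongr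
      _ < 1 := by linarith
  have hratio : (c - b) / (c + b) = (σ - 1) / σ := by
    simp only [σ]; field_simp; ring
  rw [hratio]
  exact le_re_one_add_sum_range_div_one_add_tsum hσ hsum hσsum m
end

section
/- For every complex number z with |z| < 1 (z ≠ 0), Re((2/√z)·sin(√z/2)) ≥ 13/15 and Re((√z/2)·csc(√z/2)) ≥ 15/17, where (2/√z)·sin(√z/2) is interpreted as the entire function Σ_{k=0}^∞ (−1)^k z^k/(4^k (2k+1)!). -/
noncomputable def sinSeries (z : ℂ) : ℂ :=
  ∑' k : ℕ, (-1) ^ k * z ^ k / ((4 ^ k * Nat.factorial (2 * k + 1) : ℕ) : ℂ)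

/-!
The series is `1 + ∑_{k ≥ 1} (-1)^k z^k / (4^k (2k+1)!)`, and for `‖z‖ ≤ 1` its tail is dominated by
`∑_{k ≥ 1} 4^{-k} / 6 = 1/18`. So `sinSeries z` lies in the closed disk of radius `r = 2/15` about `1`.
On that disk `Re s ≥ 1 - r = 13/15`, and inversion maps it to the disk with diameter
`[1/(1+r), 1/(1-r)]`, whence `Re (1/s) ≥ 1/(1+r) = 15/17`.
-/

open Complex

section DiskAboutOne

variable {s : ℂ} {r : ℝ}

lemma abs_re_sub_one_le_of_norm_sub_one_le (h : ‖s - 1‖ ≤ r) : |s.re - 1| ≤ r := by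
  simpa only [sub_re, one_re] using (abs_re_le_norm (s - 1)).trans h

lemma one_sub_le_re_of_norm_sub_one_le (h : ‖s - 1‖ ≤ r) : 1 - r ≤ s.re := by
  linarith [(abs_le.mp (abs_re_sub_one_le_of_norm_sub_one_le h)).1]

lemma inv_one_add_le_re_one_div_of_norm_sub_one_le (h : ‖s - 1‖ ≤ r) (hr : r < 1) :
    1 / (1 + r) ≤ (1 / s).re := by
  have hdisk : (s.re - 1) ^ 2 + s.im ^ 2 ≤ r ^ 2 := by
    have hsq := pow_le_pow_left₀ (norm_nonneg _) h 2
    rwa [← normSq_eq_norm_sq, normSq_apply, sub_re, sub_im, one_re, one_im, sub_zero,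
      ← sq, ← sq] at hsq
  obtain ⟨hre_lower, hre_upper⟩ := abs_le.mp (abs_re_sub_one_le_of_norm_sub_one_le h)
  have hnormSq_pos : 0 < normSq s := by
    rw [normSq_apply]; nlinarith [sq_nonneg s.im]
  have hnormSq_le : normSq s ≤ s.re * (1 + r) := by
    rw [normSq_apply]; nlinarith
  rw [one_div s, inv_re, div_le_div_iff₀ (by linarith) hnormSq_pos]
  linarith

end DiskAboutOne

section SinSeries

noncomputable def sinSeriesTerm (z : ℂ) (k : ℕ) : ℂ :=
  (-1) ^ k * z ^ k / ((4 ^ k * Nat.factorial (2 * k + 1) : ℕ) : ℂ)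

lemma sinSeries_eq_tsum (z : ℂ) : sinSeries z = ∑' k, sinSeriesTerm z k := rfl

lemma sinSeriesTerm_zero (z : ℂ) : sinSeriesTerm z 0 = 1 := by
  simp [sinSeriesTerm]

lemma norm_sinSeriesTerm_succ_le {z : ℂ} (hz : ‖z‖ ≤ 1) (k : ℕ) :
    ‖sinSeriesTerm z (k + 1)‖ ≤ 1 / 24 * (1 / 4) ^ k := by
  have hfac : (6 : ℝ) ≤ (2 * (k + 1) + 1).factorial := by
    exact_mod_cast (Nat.factorial_le (by omega : 3 ≤ 2 * (k + 1) + 1))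
  have hzpow : ‖z‖ ^ (k + 1) ≤ 1 := pow_le_one₀ (norm_nonneg z) hz
  rw [sinSeriesTerm, norm_div, norm_mul, norm_pow, norm_pow, norm_neg, norm_one, one_pow, one_mul,
    Complex.norm_natCast]
  push_cast
  rw [div_le_iff₀ (by positivity), one_div_pow]
  calc ‖z‖ ^ (k + 1) ≤ 1 := hzpow
    _ = 1 / 24 * (1 / 4 ^ k) * (4 ^ k * 4 * 6) := by field_simp; norm_num
    _ ≤ _ := by rw [pow_succ]; gcongr

lemma norm_sinSeries_sub_one_le {z : ℂ} (hz : ‖z‖ ≤ 1) : ‖sinSeries z - 1‖ ≤ 1 / 18 := by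
  have hgeom : HasSum (fun k : ℕ => 1 / 24 * (1 / 4 : ℝ) ^ k) (1 / 18) := by
    have := (hasSum_geometric_of_lt_one (r := (1 / 4 : ℝ)) (by norm_num) (by norm_num)).mul_left
      (1 / 24)
    rwa [show (1 / 24 : ℝ) * (1 - 1 / 4)⁻¹ = 1 / 18 by norm_num] at this
  have htail : Summable fun k => sinSeriesTerm z (k + 1) :=
    .of_norm_bounded hgeom.summable (norm_sinSeriesTerm_succ_le hz)
  rw [sinSeries_eq_tsum, ((summable_nat_add_iff 1).mp htail).tsum_eq_zero_add,
    sinSeriesTerm_zero, add_sub_cancel_left]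
  exact tsum_of_norm_bounded hgeom (norm_sinSeriesTerm_succ_le hz)

end SinSeries

theorem sin_re_bounds_general (z : ℂ) (hz : ‖z‖ < 1) :
    13 / 15 ≤ (sinSeries z).re ∧ 15 / 17 ≤ (1 / sinSeries z).re := by
  have hdisk : ‖sinSeries z - 1‖ ≤ 2 / 15 :=
    (norm_sinSeries_sub_one_le hz.le).trans (by norm_num)
  constructor
  · linarith [one_sub_le_re_of_norm_sub_one_le hdisk]
  · linarith [inv_one_add_le_re_one_div_of_norm_sub_one_le hdisk (by norm_num)]

theorem sin_re_bounds (z : ℂ) (hz : ‖z‖ < 1) (hz0 : z ≠ 0) :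
    13 / 15 ≤ (sinSeries z).re ∧ 15 / 17 ≤ (1 / sinSeries z).re :=
  sin_re_bounds_general z hz
end

section
/- For every complex number z with |z| < 1 (z ≠ 0), Re(sinh(√z)/√z) ≥ 1/3 and Re(√z / sinh(√z)) ≥ 3/5, where sinh(√z)/√z denotes the entire function Σ_{k=0}^∞ z^k/(2k+1)!. -/
noncomputable def sinhSeries2 (z : ℂ) : ℂ := ∑' k : ℕ, z ^ k / (Nat.factorial (2 * k + 1) : ℂ)

lemma fact_ge6 : ∀ k : ℕ, 6 * 20 ^ k ≤ Nat.factorial (2 * (k + 1) + 1) := by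
  intro k
  induction k with
  | zero => simp [Nat.factorial]
  | succ n ih =>
    have h2 : 2 * (n + 2) + 1 = (2 * (n + 1) + 1) + 2 := by ring
    rw [h2]
    have h1 : Nat.factorial ((2 * (n + 1) + 1) + 2)
        = ((2 * (n + 1) + 1) + 2) * (((2 * (n + 1) + 1) + 1) * Nat.factorial (2 * (n + 1) + 1)) := by
      rw [Nat.factorial_succ, Nat.factorial_succ]
    rw [h1]
    calc 6 * 20 ^ (n + 1) = 20 * (6 * 20 ^ n) := by ring
      _ ≤ 20 * Nat.factorial (2 * (n + 1) + 1) := Nat.mul_le_mul_left _ ih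
      _ = 5 * (4 * Nat.factorial (2 * (n + 1) + 1)) := by ring
      _ ≤ (2 * (n + 1) + 1 + 2) * ((2 * (n + 1) + 1 + 1) * Nat.factorial (2 * (n + 1) + 1)) := by
          apply Nat.mul_le_mul (by omega)
          exact Nat.mul_le_mul_right _ (by omega)

theorem sinh_re_bounds2 (z : ℂ) (hz : ‖z‖ < 1) (hz0 : z ≠ 0) :
    1 / 3 ≤ (sinhSeries2 z).re ∧ 3 / 5 ≤ (1 / sinhSeries2 z).re := by
  set a : ℕ → ℂ := fun k => z ^ k / (Nat.factorial (2 * k + 1) : ℂ) with ha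
  have hnorm : ∀ k, ‖a k‖ ≤ ‖z‖ ^ k := by
    intro k
    have h1 : (1 : ℝ) ≤ (Nat.factorial (2 * k + 1) : ℝ) := by
      exact_mod_cast Nat.one_le_iff_ne_zero.mpr (Nat.factorial_ne_zero _)
    have h2 : ‖a k‖ = ‖z‖ ^ k / (Nat.factorial (2 * k + 1) : ℝ) := by
      simp [ha, map_div₀, map_pow, Complex.norm_natCast]
    rw [h2]
    have h3 : (0 : ℝ) ≤ ‖z‖ ^ k := pow_nonneg (norm_nonneg z) k
    calc ‖z‖ ^ k / (Nat.factorial (2 * k + 1) : ℝ)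
        ≤ ‖z‖ ^ k / 1 := by
          apply div_le_div_of_nonneg_left h3 (by norm_num) h1 |>.trans_eq rfl
      _ = ‖z‖ ^ k := by ring
  have hsum : Summable a :=
    Summable.of_norm (Summable.of_nonneg_of_le (fun k => norm_nonneg _) hnorm
      (summable_geometric_of_lt_one (norm_nonneg z) hz))
  set t : ℂ := ∑' k : ℕ, a (k + 1) with ht
  have hsumt : Summable (fun k => a (k + 1)) := (summable_nat_add_iff 1).mpr hsum
  have hsplit : sinhSeries2 z = 1 + t := by
    have h0 : a 0 = 1 := by simp [ha]
    rw [show sinhSeries2 z = ∑' k, a k from rfl, Summable.tsum_eq_zero_add hsum, h0, ht]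
  have hbound : ∀ k, ‖a (k + 1)‖ ≤ (1 / 6 : ℝ) * (1 / 20) ^ k := by
    intro k
    have h1 : (6 * 20 ^ k : ℝ) ≤ (Nat.factorial (2 * (k + 1) + 1) : ℝ) := by
      exact_mod_cast fact_ge6 k
    have h2 : ‖a (k + 1)‖ = ‖z‖ ^ (k + 1) / (Nat.factorial (2 * (k + 1) + 1) : ℝ) := by
      simp [ha, map_div₀, map_pow, Complex.norm_natCast]
    rw [h2]
    have h3 : ‖z‖ ^ (k + 1) ≤ 1 := pow_le_one₀ (norm_nonneg z) hz.le
    have h4 : (0 : ℝ) < 6 * 20 ^ k := by positivity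
    calc ‖z‖ ^ (k + 1) / (Nat.factorial (2 * (k + 1) + 1) : ℝ)
        ≤ 1 / (6 * 20 ^ k : ℝ) := div_le_div₀ zero_le_one h3 h4 h1
      _ = (1 / 6 : ℝ) * (1 / 20) ^ k := by rw [div_pow]; ring
  have hgeo : Summable (fun k : ℕ => (1 / 6 : ℝ) * (1 / 20) ^ k) :=
    (summable_geometric_of_lt_one (by norm_num) (by norm_num)).mul_left _
  have htn : ‖t‖ ≤ 10 / 57 := by
    calc ‖t‖ ≤ ∑' k, ‖a (k + 1)‖ := norm_tsum_le_tsum_norm hsumt.norm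
      _ ≤ ∑' k : ℕ, (1 / 6 : ℝ) * (1 / 20) ^ k := Summable.tsum_le_tsum hbound hsumt.norm hgeo
      _ = (1 / 6 : ℝ) * (1 - 1 / 20)⁻¹ := by
          rw [tsum_mul_left, tsum_geometric_of_lt_one (by norm_num) (by norm_num)]
      _ = 10 / 57 := by norm_num
  have htre : -(10 / 57 : ℝ) ≤ t.re := by
    have h5 := Complex.abs_re_le_norm t
    have h6 := neg_abs_le t.re
    have h7 : ‖t‖ ≤ 10 / 57 := htn
    linarith
  have hfn : (47 / 57 : ℝ) ≤ ‖sinhSeries2 z‖ := by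
    have h8 := norm_sub_norm_le (1 : ℂ) (-t)
    simp only [norm_one, norm_neg, sub_neg_eq_add] at h8
    rw [hsplit]
    linarith
  have hf0 : sinhSeries2 z ≠ 0 := by
    intro h
    rw [h, norm_zero] at hfn
    norm_num at hfn
  constructor
  · have h9 : (sinhSeries2 z).re = 1 + t.re := by rw [hsplit]; simp
    rw [h9]; linarith
  · have hkey : (1 / sinhSeries2 z) - 1 = -t / sinhSeries2 z := by
      field_simp
      rw [hsplit]; ring
    have h10 : ‖1 / sinhSeries2 z - 1‖ ≤ 10 / 47 := by
      rw [hkey, norm_div, norm_neg,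
        div_le_iff₀ (by linarith : (0 : ℝ) < ‖sinhSeries2 z‖)]
      nlinarith [htn, hfn]
    have h11 := Complex.abs_re_le_norm (1 / sinhSeries2 z - 1)
    have h12 := neg_abs_le ((1 / sinhSeries2 z - 1).re)
    have h13 : (1 / sinhSeries2 z - 1).re = (1 / sinhSeries2 z).re - 1 := by simp
    linarith
end
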